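/- Integrating the identity of the previous context from 0 to t and rearranging, the estimation error satisfies: ℓᵀFx(t) − ∫₀ᵗ yᵀ(s)u(t−s)ds = (Fx(0))ᵀ(F⁺)ᵀFᵀq(t) + ∫₀ᵗ [qᵀ(t−s)f(s) − uᵀ(t−s)η(s)] ds, provided Fᵀq(0) = Fᵀℓ. -/

import Mathlib

/-!
Since `F F⁺ F = F`, the pairing `g(s) = xᵀ(s)Fᵀq(t−s)` equals `(F⁺Fx(s)) ⬝ Fᵀq(t−s)`, a product
of the two absolutely continuous functions `Fx` and `Fᵀq`, so integration by parts gives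
`∫₀ᵗ g' = g(t) − g(0)`, which are the two boundary terms of the claim. The equations only
control `Fx` and `Fᵀq`, not `x` and `q`; to recognise `g'` as the integrand
`qᵀ(t−s)f(s) + (Hx(s))ᵀu(t−s)` one needs that `(Fx)'` lies in the range of `F` and `(Fᵀq)'`
in the range of `Fᵀ` almost everywhere. This holds because these ranges are closed and, by
Lebesgue's differentiation theorem, the primitive of an integrable function has that function
as its derivative almost everywhere.
-/

open Matrix MeasureTheory

/-- `Fp` is the Moore–Penrose pseudoinverse of `F`. -/
def IsMoorePenrose {m n : ℕ} (F : Matrix (Fin m) (Fin n) ℝ)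
    (Fp : Matrix (Fin n) (Fin m) ℝ) : Prop :=
  F * Fp * F = F ∧ Fp * F * Fp = Fp ∧ (F * Fp)ᵀ = F * Fp ∧ (Fp * F)ᵀ = Fp * F

open Set Filter Topology

section Primitive

variable {E : Type*} [NormedAddCommGroup E] [NormedSpace ℝ E]

theorem HasDerivAt.mem_of_eventually_mem {V : Submodule ℝ E} (hV : IsClosed (V : Set E))
    {f : ℝ → E} {f' : E} {x : ℝ} (hf : HasDerivAt f f' x) (h : ∀ᶠ y in 𝓝 x, f y ∈ V) :
    f' ∈ V := by
  refine hV.mem_of_tendsto (hasDerivAt_iff_tendsto_slope.1 hf) ?_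
  filter_upwards [nhdsWithin_le_nhds h] with y hy
  exact V.smul_mem _ (V.sub_mem hy h.self_of_nhds)

theorem IntervalIntegrable.ae_mem_of_forall_integral_mem [CompleteSpace E]
    {V : Submodule ℝ E} (hV : IsClosed (V : Set E)) {g : ℝ → E} {a b : ℝ}
    (hg : IntervalIntegrable g volume a b) (h : ∀ τ ∈ uIcc a b, ∫ s in a..τ, g s ∈ V) :
    ∀ᵐ s, s ∈ uIcc a b → g s ∈ V := by
  have hne (c : ℝ) : ∀ᵐ s : ℝ, s ≠ c := by simp [ae_iff, measure_singleton]
  filter_upwards [hg.ae_hasDerivAt_integral, hne a, hne b] with s hderiv hsa hsb hs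
  refine (hderiv hs a left_mem_uIcc).mem_of_eventually_mem hV ?_
  have hs_interior : uIcc a b ∈ 𝓝 s := by apply Icc_mem_nhds <;> grind [mem_uIcc]
  filter_upwards [hs_interior] using h

theorem ContinuousOn.of_eq_add_integral {f f' : ℝ → E} {a b : ℝ}
    (hf' : IntervalIntegrable f' volume a b)
    (hf : ∀ x ∈ uIcc a b, f x = f a + ∫ s in a..x, f' s) : ContinuousOn f (uIcc a b) :=
  (continuousOn_const.add
    (intervalIntegral.continuousOn_primitive_interval' hf' left_mem_uIcc)).congr hf

end Primitive

section IntegrationByParts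

theorem absolutelyContinuousOnInterval_const_add_integral {f' : ℝ → ℝ} {a b : ℝ}
    (hf' : IntervalIntegrable f' volume a b) (c : ℝ) :
    AbsolutelyContinuousOnInterval (fun x ↦ c + ∫ s in a..x, f' s) a b :=
  ((LipschitzWith.const c).lipschitzOnWith.absolutelyContinuousOnInterval).add
    (hf'.absolutelyContinuousOnInterval_intervalIntegral left_mem_uIcc)

theorem IntervalIntegrable.ae_deriv_const_add_integral {f' : ℝ → ℝ} {a b : ℝ}
    (hf' : IntervalIntegrable f' volume a b) (c : ℝ) :
    ∀ᵐ x, x ∈ uIcc a b → deriv (fun x ↦ c + ∫ s in a..x, f' s) x = f' x := by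
  filter_upwards [hf'.ae_hasDerivAt_integral] with x hx hxab
  exact ((hx hxab a left_mem_uIcc).const_add c).deriv

theorem intervalIntegral.integral_mul_add_mul_eq_sub_of_eq_add_integral {f g f' g' : ℝ → ℝ}
    {a b : ℝ} (hf' : IntervalIntegrable f' volume a b) (hg' : IntervalIntegrable g' volume a b)
    (hf : ∀ x ∈ uIcc a b, f x = f a + ∫ s in a..x, f' s)
    (hg : ∀ x ∈ uIcc a b, g x = g a + ∫ s in a..x, g' s) :
    ∫ x in a..b, (f' x * g x + f x * g' x) = f b * g b - f a * g a := by
  have key :=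
    (absolutelyContinuousOnInterval_const_add_integral hf' (f a)).integral_deriv_mul_eq_sub
      (absolutelyContinuousOnInterval_const_add_integral hg' (g a))
  simp only [← hf b right_mem_uIcc, ← hg b right_mem_uIcc, intervalIntegral.integral_same,
    add_zero] at key
  rw [← key]
  refine intervalIntegral.integral_congr_ae ?_
  filter_upwards [hf'.ae_deriv_const_add_integral (f a), hg'.ae_deriv_const_add_integral (g a)]
    with x hfx hgx hx
  have hx := uIoc_subset_uIcc hx
  rw [hfx hx, hgx hx, ← hf x hx, ← hg x hx]

variable {ι : Type*} [Fintype ι]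

theorem IntervalIntegrable.eval {f : ℝ → ι → ℝ} {a b : ℝ}
    (hf : IntervalIntegrable f volume a b) (i : ι) : IntervalIntegrable (f · i) volume a b :=
  ⟨hf.1.eval i, hf.2.eval i⟩

theorem intervalIntegral.eval_integral {f : ℝ → ι → ℝ} {a b : ℝ}
    (hf : IntervalIntegrable f volume a b) (i : ι) :
    (∫ x in a..b, f x) i = ∫ x in a..b, f x i :=
  ((ContinuousLinearMap.proj (R := ℝ) (φ := fun _ : ι ↦ ℝ) i).intervalIntegral_comp_comm hf).symm

theorem intervalIntegral.integral_dotProduct_add_dotProduct_eq_sub_of_eq_add_integral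
    {P R p r : ℝ → ι → ℝ} {a b : ℝ}
    (hp : IntervalIntegrable p volume a b) (hr : IntervalIntegrable r volume a b)
    (hP : ∀ x ∈ uIcc a b, P x = P a + ∫ s in a..x, p s)
    (hR : ∀ x ∈ uIcc a b, R x = R a + ∫ s in a..x, r s) :
    ∫ x in a..b, (p x ⬝ᵥ R x + P x ⬝ᵥ r x) = P b ⬝ᵥ R b - P a ⬝ᵥ R a := by
  have eval_eq {F f : ℝ → ι → ℝ} (hf : IntervalIntegrable f volume a b)
      (hF : ∀ x ∈ uIcc a b, F x = F a + ∫ s in a..x, f s) (i : ι) :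
      ∀ x ∈ uIcc a b, F x i = F a i + ∫ s in a..x, f s i := fun x hx ↦ by
    rw [hF x hx, Pi.add_apply, eval_integral (hf.mono_set (uIcc_subset_uIcc_left hx))]
  have hterm (i : ι) :
      IntervalIntegrable (fun x ↦ p x i * R x i + P x i * r x i) volume a b :=
    ((hp.eval i).mul_continuousOn (.of_eq_add_integral (hr.eval i) (eval_eq hr hR i))).add
      ((hr.eval i).continuousOn_mul (.of_eq_add_integral (hp.eval i) (eval_eq hp hP i)))
  simp only [dotProduct, ← Finset.sum_add_distrib, ← Finset.sum_sub_distrib]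
  rw [integral_finsetSum fun i _ ↦ hterm i]
  exact Finset.sum_congr rfl fun i _ ↦ integral_mul_add_mul_eq_sub_of_eq_add_integral
    (hp.eval i) (hr.eval i) (eval_eq hp hP i) (eval_eq hr hR i)

theorem intervalIntegral.integral_dotProduct_comp_sub_eq_of_eq_add_integral
    {P Q p q : ℝ → ι → ℝ} {t : ℝ}
    (hp : IntervalIntegrable p volume 0 t) (hq : IntervalIntegrable q volume 0 t)
    (hP : ∀ τ ∈ uIcc 0 t, P τ = P 0 + ∫ s in 0..τ, p s)
    (hQ : ∀ τ ∈ uIcc 0 t, Q τ = Q 0 + ∫ s in 0..τ, q s) :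
    ∫ s in 0..t, (p s ⬝ᵥ Q (t - s) - P s ⬝ᵥ q (t - s)) = P t ⬝ᵥ Q 0 - P 0 ⬝ᵥ Q t := by
  have hq' : IntervalIntegrable (fun s ↦ -q (t - s)) volume 0 t := by
    have := (hq.comp_sub_left t).symm
    rw [sub_self, sub_zero] at this
    exact this.neg
  have hQ' : ∀ x ∈ uIcc 0 t, Q (t - x) = Q (t - 0) + ∫ s in 0..x, -q (t - s) := by
    intro x hx
    have hx' : t - x ∈ uIcc 0 t := by grind [mem_uIcc]
    rw [integral_neg, integral_comp_sub_left, sub_zero, hQ t right_mem_uIcc, hQ _ hx',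
      ← integral_interval_sub_left hq (hq.mono_set (uIcc_subset_uIcc_left hx'))]
    abel
  have := integral_dotProduct_add_dotProduct_eq_sub_of_eq_add_integral hp hq' hP hQ'
  simpa only [dotProduct_neg, ← sub_eq_add_neg, sub_zero, sub_self] using this

end IntegrationByParts

section Matrix

variable {m n : Type*} [Fintype m] [Fintype n]

theorem Matrix.mulVec_mulVec_eq_self_of_mem_range {R : Type*} [CommSemiring R]
    {F : Matrix m n R} {G : Matrix n m R} (hFGF : F * G * F = F) {v : m → R}
    (hv : v ∈ LinearMap.range F.mulVecLin) : F *ᵥ (G *ᵥ v) = v := by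
  obtain ⟨w, rfl⟩ := hv
  rw [mulVecLin_apply, mulVec_mulVec, mulVec_mulVec, hFGF]

theorem Matrix.mulVec_dotProduct_transpose_mulVec_of_mem_range {R : Type*} [CommSemiring R]
    {F : Matrix m n R} {G : Matrix n m R} (hFGF : F * G * F = F) {v : m → R}
    (hv : v ∈ LinearMap.range F.mulVecLin) (w : m → R) : G *ᵥ v ⬝ᵥ Fᵀ *ᵥ w = v ⬝ᵥ w := by
  rw [dotProduct_mulVec, vecMul_transpose, mulVec_mulVec_eq_self_of_mem_range hFGF hv]

theorem Matrix.mulVec_mulVec_dotProduct_of_mem_range_transpose {R : Type*} [CommSemiring R]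
    {F : Matrix m n R} {G : Matrix n m R} (hFGF : F * G * F = F) (v : n → R) {w : n → R}
    (hw : w ∈ LinearMap.range Fᵀ.mulVecLin) : G *ᵥ (F *ᵥ v) ⬝ᵥ w = v ⬝ᵥ w := by
  have hFGF' : Fᵀ * Gᵀ * Fᵀ = Fᵀ := by
    simpa only [transpose_mul, Matrix.mul_assoc] using congrArg transpose hFGF
  calc G *ᵥ (F *ᵥ v) ⬝ᵥ w = v ⬝ᵥ Fᵀ *ᵥ (Gᵀ *ᵥ w) := by
        rw [dotProduct_mulVec, vecMul_transpose, dotProduct_mulVec, vecMul_transpose]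
    _ = v ⬝ᵥ w := by rw [mulVec_mulVec_eq_self_of_mem_range hFGF' hw]

theorem Matrix.mulVec_dotProduct_sub_eq_of_mem_range {k : Type*} [Fintype k]
    {F A : Matrix m n ℝ} {H : Matrix k n ℝ} {G : Matrix n m ℝ} (hFGF : F * G * F = F)
    {x : n → ℝ} {f q : m → ℝ} {u : k → ℝ} (ha : A *ᵥ x + f ∈ LinearMap.range F.mulVecLin)
    (hb : Aᵀ *ᵥ q - Hᵀ *ᵥ u ∈ LinearMap.range Fᵀ.mulVecLin) :
    G *ᵥ (A *ᵥ x + f) ⬝ᵥ Fᵀ *ᵥ q - G *ᵥ (F *ᵥ x) ⬝ᵥ (Aᵀ *ᵥ q - Hᵀ *ᵥ u)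
      = q ⬝ᵥ f + H *ᵥ x ⬝ᵥ u := by
  rw [mulVec_dotProduct_transpose_mulVec_of_mem_range hFGF ha,
    mulVec_mulVec_dotProduct_of_mem_range_transpose hFGF x hb, add_dotProduct, dotProduct_sub,
    dotProduct_transpose_mulVec, dotProduct_transpose_mulVec, dotProduct_comm f,
    dotProduct_comm u, dotProduct_comm (A *ᵥ x)]
  ring

theorem IntervalIntegrable.const_mulVec (M : Matrix m n ℝ) {g : ℝ → n → ℝ} {a b : ℝ}
    (hg : IntervalIntegrable g volume a b) : IntervalIntegrable (fun s ↦ M *ᵥ g s) volume a b :=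
  ⟨(LinearMap.toContinuousLinearMap M.mulVecLin).integrable_comp hg.1,
    (LinearMap.toContinuousLinearMap M.mulVecLin).integrable_comp hg.2⟩

theorem Matrix.mulVec_intervalIntegral (M : Matrix m n ℝ) {g : ℝ → n → ℝ} {a b : ℝ}
    (hg : IntervalIntegrable g volume a b) :
    M *ᵥ ∫ s in a..b, g s = ∫ s in a..b, M *ᵥ g s :=
  ((LinearMap.toContinuousLinearMap M.mulVecLin).intervalIntegral_comp_comm hg).symm

theorem ae_mem_range_of_mulVec_eq_add_integral {F : Matrix m n ℝ} {x : ℝ → n → ℝ}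
    {p : ℝ → m → ℝ} {a b : ℝ} (hp : IntervalIntegrable p volume a b)
    (hx : ∀ τ ∈ uIcc a b, F *ᵥ x τ = F *ᵥ x a + ∫ s in a..τ, p s) :
    ∀ᵐ s, s ∈ uIcc a b → p s ∈ LinearMap.range F.mulVecLin :=
  hp.ae_mem_of_forall_integral_mem (Submodule.closed_of_finiteDimensional _)
    fun τ hτ ↦ ⟨x τ - x a, by simp [mulVec_sub, hx τ hτ]⟩

end Matrix

/-- Integrated error representation: if `(x,f,y,η)` solves the primal DAE, `(q,u)` solves
the dual DAE with `Fᵀq(0) = Fᵀℓ`, then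
`ℓᵀFx(t) − ∫₀ᵗ yᵀ(s)u(t−s)ds = (Fx(0))ᵀ(F⁺)ᵀFᵀq(t) + ∫₀ᵗ (qᵀ(t−s)f(s) − uᵀ(t−s)η(s))ds`. -/
theorem error_representation {m n p : ℕ}
    (F A : Matrix (Fin m) (Fin n) ℝ) (H : Matrix (Fin p) (Fin n) ℝ)
    (Fp : Matrix (Fin n) (Fin m) ℝ) (hFp : IsMoorePenrose F Fp)
    (ℓ : Fin m → ℝ) (t : ℝ) (ht : 0 < t)
    (x : ℝ → Fin n → ℝ) (f : ℝ → Fin m → ℝ) (y η : ℝ → Fin p → ℝ)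
    (q : ℝ → Fin m → ℝ) (u : ℝ → Fin p → ℝ)
    -- (x,f,y,η) solves the primal DAE on [0,∞):
    (hxint : ∀ T > (0:ℝ), IntervalIntegrable (fun s => A.mulVec (x s) + f s) volume 0 T)
    (hx : ∀ τ ∈ Set.Ici (0:ℝ),
      F.mulVec (x τ) = F.mulVec (x 0) + ∫ s in (0:ℝ)..τ, (A.mulVec (x s) + f s))
    (hy : ∀ᵐ τ ∂(volume.restrict (Set.Ici (0:ℝ))), y τ = H.mulVec (x τ) + η τ)
    -- (q,u) solves the dual DAE on [0,∞) with Fᵀq(0) = Fᵀℓ: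
    (hqint : ∀ T > (0:ℝ), IntervalIntegrable
      (fun s => Aᵀ.mulVec (q s) - Hᵀ.mulVec (u s)) volume 0 T)
    (hq : ∀ τ ∈ Set.Ici (0:ℝ),
      Fᵀ.mulVec (q τ) = Fᵀ.mulVec (q 0)
        + ∫ s in (0:ℝ)..τ, (Aᵀ.mulVec (q s) - Hᵀ.mulVec (u s)))
    (hq0 : Fᵀ.mulVec (q 0) = Fᵀ.mulVec ℓ)
    -- integrability of the scalar integrands:
    (hyu : IntervalIntegrable (fun s => y s ⬝ᵥ u (t - s)) volume 0 t)
    (hfu : IntervalIntegrable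
      (fun s => q (t - s) ⬝ᵥ f s - u (t - s) ⬝ᵥ η s) volume 0 t) :
    ℓ ⬝ᵥ F.mulVec (x t) - (∫ s in (0:ℝ)..t, y s ⬝ᵥ u (t - s))
      = F.mulVec (x 0) ⬝ᵥ Fpᵀ.mulVec (Fᵀ.mulVec (q t))
        + ∫ s in (0:ℝ)..t, (q (t - s) ⬝ᵥ f s - u (t - s) ⬝ᵥ η s) := by
  set a : ℝ → Fin m → ℝ := fun s ↦ A *ᵥ x s + f s
  set b : ℝ → Fin n → ℝ := fun s ↦ Aᵀ *ᵥ q s - Hᵀ *ᵥ u s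
  have ha : IntervalIntegrable a volume 0 t := hxint t ht
  have hb : IntervalIntegrable b volume 0 t := hqint t ht
  have hnonneg : uIcc 0 t ⊆ Ici 0 := uIcc_of_le ht.le ▸ Icc_subset_Ici_self
  have hFx : ∀ τ ∈ uIcc 0 t, F *ᵥ x τ = F *ᵥ x 0 + ∫ s in 0..τ, a s :=
    fun τ hτ ↦ hx τ (hnonneg hτ)
  have hFq : ∀ τ ∈ uIcc 0 t, Fᵀ *ᵥ q τ = Fᵀ *ᵥ q 0 + ∫ s in 0..τ, b s :=
    fun τ hτ ↦ hq τ (hnonneg hτ)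
  have hFFpF : F * Fp * F = F := hFp.1
  have ha_range := ae_mem_range_of_mulVec_eq_add_integral ha hFx
  have hb_range : ∀ᵐ s, t - s ∈ uIcc 0 t → b (t - s) ∈ LinearMap.range Fᵀ.mulVecLin :=
    (Measure.measurePreserving_sub_left volume t).quasiMeasurePreserving.ae
      (ae_mem_range_of_mulVec_eq_add_integral hb hFq)
  have hintegrand : ∫ s in 0..t, (y s ⬝ᵥ u (t - s) + (q (t - s) ⬝ᵥ f s - u (t - s) ⬝ᵥ η s))
      = ∫ s in 0..t, (Fp *ᵥ a s ⬝ᵥ Fᵀ *ᵥ q (t - s) - Fp *ᵥ (F *ᵥ x s) ⬝ᵥ b (t - s)) := by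
    refine intervalIntegral.integral_congr_ae ?_
    filter_upwards [ha_range, hb_range, ae_imp_of_ae_restrict hy] with s has hbs hys hs
    have hs : s ∈ uIcc 0 t := uIoc_subset_uIcc hs
    rw [mulVec_dotProduct_sub_eq_of_mem_range hFFpF (has hs) (hbs (by grind [mem_uIcc])),
      hys (hnonneg hs), add_dotProduct, dotProduct_comm (u (t - s)) (η s)]
    ring
  have hFpFx : ∀ τ ∈ uIcc 0 t, Fp *ᵥ (F *ᵥ x τ) = Fp *ᵥ (F *ᵥ x 0) + ∫ s in 0..τ, Fp *ᵥ a s :=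
    fun τ hτ ↦ by
      rw [hFx τ hτ, mulVec_add, mulVec_intervalIntegral Fp (ha.mono_set (uIcc_subset_uIcc_left hτ))]
  have hparts := intervalIntegral.integral_dotProduct_comp_sub_eq_of_eq_add_integral
    (ha.const_mulVec Fp) hb hFpFx hFq
  have hend : Fp *ᵥ (F *ᵥ x t) ⬝ᵥ Fᵀ *ᵥ q 0 = ℓ ⬝ᵥ F *ᵥ x t := by
    rw [hq0, mulVec_dotProduct_transpose_mulVec_of_mem_range hFFpF (v := F *ᵥ x t) ⟨x t, rfl⟩,
      dotProduct_comm]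
  have hstart : Fp *ᵥ (F *ᵥ x 0) ⬝ᵥ Fᵀ *ᵥ q t = F *ᵥ x 0 ⬝ᵥ Fpᵀ *ᵥ (Fᵀ *ᵥ q t) := by
    rw [dotProduct_mulVec (F *ᵥ x 0), vecMul_transpose]
  rw [intervalIntegral.integral_add hyu hfu] at hintegrand
  linarith
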